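/- arXiv:2308.06600 — 3 statements merged into one kernel-verified Lean document; each statement's English description precedes it below -/
import Mathlib

section
/- There exists an absolute constant c > 0 such that the following holds. Let Σ be a finite set, μ a probability distribution on Σ with full support, n, d ∈ ℕ with d ≥ 1, and ξ > 0 with ξ ≥ 2^{−c·n/d²}. If f : Σ^n → {0,1} satisfies W_{≤d}[f − E[f]] ≥ ξ, where E[f] and the weights are taken over μ^⊗n, then there exist a set I ⊆ [n] with |I| ≥ n/(2d) and a point y ∈ Σ^{[n]∖I} such that E_{z∼μ^I}[f_{\bar I→y}(z)] ≥ E[f] + ξ/(4e). -/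
open scoped Classical BigOperators

noncomputable section

/-- Product weight `μ^{⊗n}(x) = ∏ᵢ μ(xᵢ)` on `Ω^n`. -/
def wtp {Ω : Type*} [Fintype Ω] (μ : Ω → ℝ) {n : ℕ} (x : Fin n → Ω) : ℝ :=
  ∏ i, μ (x i)

/-- Inner product `⟨f,g⟩ = E_{x∼μ^{⊗n}}[f(x)·conj(g(x))]` on functions `Ω^n → ℂ`. -/
def innerμ {Ω : Type*} [Fintype Ω] (μ : Ω → ℝ) {n : ℕ} (f g : (Fin n → Ω) → ℂ) : ℂ :=
  ∑ x, (wtp μ x : ℂ) * f x * starRingEnd ℂ (g x)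

/-- `g` is an `S`-junta: it depends only on the coordinates in `S`. -/
def IsJunta {Ω : Type*} {n : ℕ} (g : (Fin n → Ω) → ℂ) (S : Finset (Fin n)) : Prop :=
  ∀ x y : Fin n → Ω, (∀ i ∈ S, x i = y i) → g x = g y

/-- Membership in `V_{=S} = V_{⊆S} ∩ ⋂_{T ⊊ S} V_{⊆T}^⊥`. -/
def InVeq {Ω : Type*} [Fintype Ω] (μ : Ω → ℝ) {n : ℕ}
    (g : (Fin n → Ω) → ℂ) (S : Finset (Fin n)) : Prop :=
  IsJunta g S ∧
    ∀ T : Finset (Fin n), T ⊂ S → ∀ h : (Fin n → Ω) → ℂ, IsJunta h T → innerμ μ g h = 0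

/-- The squared `L²(μ^{⊗n})`-norm of `g`. -/
def norm2sq {Ω : Type*} [Fintype Ω] (μ : Ω → ℝ) {n : ℕ} (g : (Fin n → Ω) → ℂ) : ℝ :=
  ∑ x, wtp μ x * Complex.normSq (g x)

/-- The point of `Ω^n` agreeing with `w` on `I` and with `y` outside `I`. -/
def mergeF {Ω : Type*} {n : ℕ} (I : Finset (Fin n)) (w : {i // i ∈ I} → Ω)
    (y : Fin n → Ω) : Fin n → Ω :=
  fun i => if h : i ∈ I then w ⟨i, h⟩ else y i


/-!
Take `c = 1/4`. The total Efron–Stein weight of `f - E f` is its variance, at most `1/4`, so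
`ξ ≥ 2^{-n/(4d²)}` forces `n ≥ 8d²`. Averaging out the coordinates in `I` kills exactly the
components `F S` with `S ∩ I ≠ ∅`, so the restricted densities `y ↦ E[f_{Ī→y}] - E f` have
variance `∑_{S ∩ I = ∅} ‖F S‖²`. A random set `I` of size `⌈n/(2d)⌉` misses each `S` of size at
most `d` with probability at least `1 - d|I|/n ≥ 3/8`, so for some such `I` this variance is at
least `3ξ/8`. A mean-zero function with values in `[-1, 1]` somewhere reaches half its second
moment, which gives a restriction of density at least `E f + 3ξ/16 ≥ E f + ξ/(4e)`.
-/

open Finset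

section ProductWeight

variable {Ω : Type*} [Fintype Ω] {μ : Ω → ℝ} {n : ℕ}

theorem sum_pi_prod_eq_one {ι R : Type*} [Fintype ι] [DecidableEq ι] [CommSemiring R]
    {p : Ω → R} (hp : ∑ a, p a = 1) : ∑ w : ι → Ω, ∏ i, p (w i) = 1 := by
  rw [← Fintype.prod_sum fun (_ : ι) a => p a, hp, prod_const_one]

theorem sum_wtp (hμ : ∑ a, μ a = 1) : ∑ x : Fin n → Ω, wtp μ x = 1 :=
  sum_pi_prod_eq_one hμ

theorem wtp_nonneg (hμ : ∀ a, 0 ≤ μ a) (x : Fin n → Ω) : 0 ≤ wtp μ x :=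
  prod_nonneg fun i _ => hμ (x i)

theorem wtp_pos (hμ : ∀ a, 0 < μ a) (x : Fin n → Ω) : 0 < wtp μ x :=
  prod_pos fun i _ => hμ (x i)

theorem wtp_eq_prod_mul_prod_compl (I : Finset (Fin n)) (x : Fin n → Ω) :
    wtp μ x = (∏ i : {i // i ∈ I}, μ (x i)) * ∏ i ∈ Iᶜ, μ (x i) := by
  rw [prod_coe_sort I fun i => μ (x i), prod_mul_prod_compl, wtp]

end ProductWeight

section Merge

variable {Ω : Type*} {n : ℕ} {I S T : Finset (Fin n)} {g : (Fin n → Ω) → ℂ}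

theorem mergeF_of_notMem {i : Fin n} (hi : i ∉ I) (w : {i // i ∈ I} → Ω) (x : Fin n → Ω) :
    mergeF I w x i = x i :=
  dif_neg hi

theorem mergeF_coe (w : {i // i ∈ I} → Ω) (x : Fin n → Ω) (i : {i // i ∈ I}) :
    mergeF I w x i = w i :=
  dif_pos i.2

theorem mergeF_restrict_mergeF (w : {i // i ∈ I} → Ω) (x : Fin n → Ω) :
    mergeF I (fun i => x i) (mergeF I w x) = x := by
  funext i
  by_cases hi : i ∈ I
  · exact dif_pos hi
  · rw [mergeF_of_notMem hi, mergeF_of_notMem hi]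

theorem involutive_mergeF_restrict (I : Finset (Fin n)) :
    Function.Involutive fun p : (Fin n → Ω) × ({i // i ∈ I} → Ω) =>
      (mergeF I p.2 p.1, fun i => p.1 i) := by
  rintro ⟨x, w⟩
  simp only [mergeF_coe, mergeF_restrict_mergeF]

theorem IsJunta.mono (hg : IsJunta g S) (h : S ⊆ T) : IsJunta g T :=
  fun x y hxy => hg x y fun i hi => hxy i (h hi)

theorem isJunta_univ (g : (Fin n → Ω) → ℂ) : IsJunta g univ :=
  fun _ _ h => congrArg g (funext fun i => h i (mem_univ i))

theorem IsJunta.apply_mergeF (hg : IsJunta g T) (h : Disjoint T I) (w : {i // i ∈ I} → Ω)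
    (x : Fin n → Ω) : g (mergeF I w x) = g x :=
  hg _ _ fun _ hi => mergeF_of_notMem (disjoint_left.1 h hi) w x

end Merge

section AverageOver

variable {Ω : Type*} [Fintype Ω] {μ : Ω → ℝ} {n : ℕ} {I : Finset (Fin n)}
  {E : Type*} [AddCommGroup E] [Module ℝ E]

/-- `averageOver μ I G x` is the paper's `E_{z∼μ^I}[G_{Ī→x}(z)]`, the conditional expectation
of `G` given the coordinates outside `I`. -/
def averageOver (μ : Ω → ℝ) (I : Finset (Fin n)) (G : (Fin n → Ω) → E) (x : Fin n → Ω) : E :=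
  ∑ w : {i // i ∈ I} → Ω, (∏ i, μ (w i)) • G (mergeF I w x)

theorem averageOver_sum {ι : Type*} (s : Finset ι) (G : ι → (Fin n → Ω) → E) :
    averageOver μ I (∑ j ∈ s, G j) = ∑ j ∈ s, averageOver μ I (G j) := by
  funext x
  simp only [averageOver, Finset.sum_apply, smul_sum]
  exact sum_comm

theorem averageOver_sub_const (hμ : ∑ a, μ a = 1) (G : (Fin n → Ω) → E) (c : E)
    (x : Fin n → Ω) : averageOver μ I (fun y => G y - c) x = averageOver μ I G x - c := by
  simp only [averageOver, smul_sub, sum_sub_distrib, ← sum_smul, sum_pi_prod_eq_one hμ, one_smul]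

theorem averageOver_mem {s : Set E} (hs : Convex ℝ s) (hμ₀ : ∀ a, 0 ≤ μ a)
    (hμ : ∑ a, μ a = 1) {G : (Fin n → Ω) → E} (hG : ∀ x, G x ∈ s) (x : Fin n → Ω) :
    averageOver μ I G x ∈ s :=
  hs.sum_mem (fun w _ => prod_nonneg fun i _ => hμ₀ (w i)) (sum_pi_prod_eq_one hμ)
    fun _ _ => hG _

theorem averageOver_ofReal (g : (Fin n → Ω) → ℝ) :
    averageOver μ I (fun x => (g x : ℂ)) = fun x => ((averageOver μ I g x : ℝ) : ℂ) := by
  funext x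
  simp [averageOver, Complex.real_smul]

theorem sum_wtp_smul_averageOver (hμ : ∑ a, μ a = 1) (G : (Fin n → Ω) → E) :
    ∑ x, wtp μ x • averageOver μ I G x = ∑ x, wtp μ x • G x := by
  -- swapping the `I`-coordinates of `x` with `w` preserves the weight `μ^n(x) μ^I(w)`
  set e := Function.Involutive.toPerm _ (involutive_mergeF_restrict (Ω := Ω) I)
  have he : ∀ p, wtp μ (e p).1 * ∏ i, μ ((e p).2 i) = wtp μ p.1 * ∏ i, μ (p.2 i) := by
    rintro ⟨x, w⟩
    simp only [e, Function.Involutive.coe_toPerm, wtp_eq_prod_mul_prod_compl I, mergeF_coe]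
    rw [prod_congr rfl fun i hi => congrArg μ (mergeF_of_notMem (mem_compl.1 hi) w x)]
    ring
  calc ∑ x, wtp μ x • averageOver μ I G x
      = ∑ p : (Fin n → Ω) × ({i // i ∈ I} → Ω),
          (wtp μ (e p).1 * ∏ i, μ ((e p).2 i)) • G (e p).1 := by
        simp_rw [he, Fintype.sum_prod_type, averageOver, smul_sum, mul_smul]
        rfl
    _ = ∑ p : (Fin n → Ω) × ({i // i ∈ I} → Ω), (wtp μ p.1 * ∏ i, μ (p.2 i)) • G p.1 :=
        Equiv.sum_comp e fun p => (wtp μ p.1 * ∏ i, μ (p.2 i)) • G p.1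
    _ = ∑ x, wtp μ x • G x := by
        simp_rw [Fintype.sum_prod_type, mul_comm (wtp μ _), mul_smul, ← sum_smul,
          sum_pi_prod_eq_one hμ, one_smul]

end AverageOver

section Junta

variable {Ω : Type*} [Fintype Ω] {μ : Ω → ℝ} {n : ℕ} {I S T : Finset (Fin n)}
  {g G : (Fin n → Ω) → ℂ}

theorem IsJunta.averageOver (hG : IsJunta G T) : IsJunta (averageOver μ I G) (T \ I) := by
  intro x y hxy
  refine sum_congr rfl fun w _ => congrArg _ (hG _ _ fun i hi => ?_)
  by_cases hiI : i ∈ I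
  · simp only [mergeF, dif_pos hiI]
  · rw [mergeF_of_notMem hiI, mergeF_of_notMem hiI]
    exact hxy i (mem_sdiff.2 ⟨hi, hiI⟩)

theorem isJunta_averageOver_compl (G : (Fin n → Ω) → ℂ) : IsJunta (averageOver μ I G) Iᶜ :=
  compl_eq_univ_sdiff I ▸ (isJunta_univ G).averageOver

theorem averageOver_of_isJunta (hμ : ∑ a, μ a = 1) (hG : IsJunta G T) (h : Disjoint T I) :
    averageOver μ I G = G := by
  funext x
  simp_rw [averageOver, hG.apply_mergeF h, ← sum_smul, sum_pi_prod_eq_one hμ, one_smul]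

theorem averageOver_mul_of_isJunta (hg : IsJunta g Iᶜ) (G : (Fin n → Ω) → ℂ) :
    averageOver μ I (fun x => G x * g x) = fun x => averageOver μ I G x * g x := by
  funext x
  simp_rw [averageOver, sum_mul, smul_mul_assoc, hg.apply_mergeF disjoint_compl_left]

end Junta

section InnerProduct

variable {Ω : Type*} [Fintype Ω] {μ : Ω → ℝ} {n : ℕ} {I : Finset (Fin n)}
  {g : (Fin n → Ω) → ℂ}

theorem innerμ_eq_sum_smul (A B : (Fin n → Ω) → ℂ) :
    innerμ μ A B = ∑ x, wtp μ x • (A x * starRingEnd ℂ (B x)) := by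
  simp only [innerμ, Complex.real_smul, mul_assoc]

theorem innerμ_conj_symm (A B : (Fin n → Ω) → ℂ) :
    starRingEnd ℂ (innerμ μ B A) = innerμ μ A B := by
  simp only [innerμ, map_sum, map_mul, Complex.conj_conj, Complex.conj_ofReal]
  exact sum_congr rfl fun x _ => by ring

theorem innerμ_self (g : (Fin n → Ω) → ℂ) : innerμ μ g g = norm2sq μ g := by
  simp only [innerμ, norm2sq, mul_assoc, Complex.mul_conj, Complex.ofReal_sum,
    Complex.ofReal_mul]

theorem innerμ_sum_left {ι : Type*} (s : Finset ι) (A : ι → (Fin n → Ω) → ℂ)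
    (B : (Fin n → Ω) → ℂ) : innerμ μ (∑ j ∈ s, A j) B = ∑ j ∈ s, innerμ μ (A j) B := by
  simp only [innerμ, Finset.sum_apply, mul_sum, sum_mul]
  exact sum_comm

theorem innerμ_sum_right {ι : Type*} (s : Finset ι) (A : (Fin n → Ω) → ℂ)
    (B : ι → (Fin n → Ω) → ℂ) : innerμ μ A (∑ j ∈ s, B j) = ∑ j ∈ s, innerμ μ A (B j) := by
  simp_rw [← innerμ_conj_symm A, innerμ_sum_left, map_sum]

theorem norm2sq_nonneg (hμ₀ : ∀ a, 0 ≤ μ a) (g : (Fin n → Ω) → ℂ) : 0 ≤ norm2sq μ g :=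
  sum_nonneg fun x _ => mul_nonneg (wtp_nonneg hμ₀ x) (Complex.normSq_nonneg _)

theorem eq_zero_of_norm2sq_eq_zero (hμ : ∀ a, 0 < μ a) (h : norm2sq μ g = 0) : g = 0 := by
  funext x
  have hx := (sum_eq_zero_iff_of_nonneg fun y _ =>
    mul_nonneg (wtp_pos hμ y).le (Complex.normSq_nonneg (g y))).1 h x (mem_univ x)
  simpa [(wtp_pos hμ x).ne'] using hx

theorem norm2sq_sum_of_pairwise {ι : Type*} {s : Finset ι} {A : ι → (Fin n → Ω) → ℂ}
    (h : ∀ j ∈ s, ∀ k ∈ s, j ≠ k → innerμ μ (A j) (A k) = 0) :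
    norm2sq μ (∑ j ∈ s, A j) = ∑ j ∈ s, norm2sq μ (A j) := by
  apply Complex.ofReal_injective
  simp_rw [Complex.ofReal_sum, ← innerμ_self, innerμ_sum_left, innerμ_sum_right]
  exact sum_congr rfl fun j hj =>
    sum_eq_single j (fun k hk hkj => h j hj k hk hkj.symm) fun hj' => absurd hj hj'

theorem norm2sq_ofReal (g : (Fin n → Ω) → ℝ) :
    norm2sq μ (fun x => (g x : ℂ)) = ∑ x, wtp μ x * g x ^ 2 := by
  simp only [norm2sq, Complex.normSq_ofReal, sq]

theorem innerμ_averageOver_left (hμ : ∑ a, μ a = 1) (hg : IsJunta g Iᶜ)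
    (G : (Fin n → Ω) → ℂ) : innerμ μ (averageOver μ I G) g = innerμ μ G g := by
  have hg' : IsJunta (fun x => starRingEnd ℂ (g x)) Iᶜ := fun x y h => congrArg _ (hg x y h)
  rw [innerμ_eq_sum_smul, innerμ_eq_sum_smul,
    ← sum_wtp_smul_averageOver hμ fun x => G x * starRingEnd ℂ (g x),
    averageOver_mul_of_isJunta hg']

theorem innerμ_averageOver_right (hμ : ∑ a, μ a = 1) (hg : IsJunta g Iᶜ)
    (G : (Fin n → Ω) → ℂ) : innerμ μ g (averageOver μ I G) = innerμ μ g G := by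
  rw [← innerμ_conj_symm, innerμ_averageOver_left hμ hg, innerμ_conj_symm]

end InnerProduct

section EfronStein

variable {Ω : Type*} [Fintype Ω] {μ : Ω → ℝ} {n : ℕ} {I S T : Finset (Fin n)}
  {A B : (Fin n → Ω) → ℂ} {F : Finset (Fin n) → (Fin n → Ω) → ℂ}

theorem InVeq.innerμ_eq_zero_of_not_subset (hμ : ∑ a, μ a = 1) (hA : InVeq μ A S)
    (hB : IsJunta B T) (h : ¬S ⊆ T) : innerμ μ A B = 0 := by
  have hA' : IsJunta A Sᶜᶜ := (compl_compl S).symm ▸ hA.1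
  rw [← innerμ_averageOver_right hμ hA' B]
  refine hA.2 (S ∩ T) (ssubset_of_subset_of_ne inter_subset_left
    fun h' => h (inter_eq_left.1 h')) _ (hB.averageOver.mono fun i hi => ?_)
  rw [mem_sdiff, mem_compl, not_not] at hi
  exact mem_inter.2 ⟨hi.2, hi.1⟩

theorem InVeq.innerμ_eq_zero (hμ : ∑ a, μ a = 1) (hA : InVeq μ A S) (hB : InVeq μ B T)
    (hne : S ≠ T) : innerμ μ A B = 0 := by
  by_cases h : S ⊆ T
  · rw [← innerμ_conj_symm,
      hB.innerμ_eq_zero_of_not_subset hμ hA.1 fun h' => hne (h.antisymm h'), map_zero]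
  · exact hA.innerμ_eq_zero_of_not_subset hμ hB.1 h

theorem InVeq.averageOver_eq_zero (hμ₀ : ∀ a, 0 < μ a) (hμ : ∑ a, μ a = 1)
    (hA : InVeq μ A S) (h : ¬Disjoint S I) : averageOver μ I A = 0 := by
  refine eq_zero_of_norm2sq_eq_zero hμ₀ (Complex.ofReal_injective ?_)
  rw [← innerμ_self, innerμ_averageOver_left hμ (isJunta_averageOver_compl A)]
  exact hA.2 (S \ I) (ssubset_of_subset_of_ne sdiff_subset
    fun h' => h (sdiff_eq_self_iff_disjoint.1 h')) _ hA.1.averageOver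

theorem averageOver_sum_inVeq (hμ₀ : ∀ a, 0 < μ a) (hμ : ∑ a, μ a = 1)
    (hF : ∀ S, InVeq μ (F S) S) (I : Finset (Fin n)) :
    averageOver μ I (∑ S, F S) = ∑ S with Disjoint S I, F S := by
  rw [averageOver_sum, sum_filter]
  refine sum_congr rfl fun S _ => ?_
  split_ifs with h
  · exact averageOver_of_isJunta hμ (hF S).1 h
  · exact (hF S).averageOver_eq_zero hμ₀ hμ h

theorem norm2sq_sum_inVeq (hμ : ∑ a, μ a = 1) (hF : ∀ S, InVeq μ (F S) S)
    (s : Finset (Finset (Fin n))) : norm2sq μ (∑ S ∈ s, F S) = ∑ S ∈ s, norm2sq μ (F S) :=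
  norm2sq_sum_of_pairwise fun S _ T _ hne => (hF S).innerμ_eq_zero hμ (hF T) hne

theorem sum_wtp_mul_averageOver_sq (hμ₀ : ∀ a, 0 < μ a) (hμ : ∑ a, μ a = 1)
    (hF : ∀ S, InVeq μ (F S) S) {g : (Fin n → Ω) → ℝ} (hg : (fun x => (g x : ℂ)) = ∑ S, F S)
    (I : Finset (Fin n)) :
    ∑ x, wtp μ x * averageOver μ I g x ^ 2 = ∑ S with Disjoint S I, norm2sq μ (F S) := by
  rw [← norm2sq_ofReal, ← averageOver_ofReal, hg, averageOver_sum_inVeq hμ₀ hμ hF,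
    norm2sq_sum_inVeq hμ hF]

end EfronStein

section WeightedMean

variable {β : Type*} [Fintype β] {p X : β → ℝ}

theorem sum_mul_sub_mean_sq_le (hp : ∀ b, 0 ≤ p b) (hp1 : ∑ b, p b = 1)
    (hX : ∀ b, X b ∈ Set.Icc (0 : ℝ) 1) :
    ∑ b, p b * (X b - ∑ b', p b' * X b') ^ 2 ≤ 1 / 4 := by
  set a := ∑ b', p b' * X b'
  calc ∑ b, p b * (X b - a) ^ 2 ≤ ∑ b, (p b * X b * (1 - 2 * a) + p b * a ^ 2) := by
        refine sum_le_sum fun b _ => ?_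
        have hX2 : p b * X b ^ 2 ≤ p b * X b :=
          mul_le_mul_of_nonneg_left (by nlinarith [(hX b).1, (hX b).2]) (hp b)
        nlinarith
    _ = a * (1 - 2 * a) + a ^ 2 := by rw [sum_add_distrib, ← sum_mul, ← sum_mul, hp1]; ring
    _ ≤ 1 / 4 := by nlinarith [sq_nonneg (2 * a - 1)]

theorem exists_sum_mul_sq_le_two_mul (hp : ∀ b, 0 ≤ p b) (hp1 : ∑ b, p b = 1)
    (hX : ∀ b, |X b| ≤ 1) (hmean : ∑ b, p b * X b = 0) :
    ∃ b, ∑ b', p b' * X b' ^ 2 ≤ 2 * X b := by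
  have : Nonempty β := by
    by_contra h
    simp [not_nonempty_iff.1 h] at hp1
  obtain ⟨b₀, hb₀⟩ := Finite.exists_max X
  have hM : 0 ≤ X b₀ :=
    calc 0 = ∑ b, p b * X b := hmean.symm
      _ ≤ ∑ b, p b * X b₀ := sum_le_sum fun b _ => mul_le_mul_of_nonneg_left (hb₀ b) (hp b)
      _ = X b₀ := by rw [← sum_mul, hp1, one_mul]
  refine ⟨b₀, ?_⟩
  calc ∑ b, p b * X b ^ 2 ≤ ∑ b, p b * (2 * X b₀ - X b) := by
        refine sum_le_sum fun b _ => mul_le_mul_of_nonneg_left ?_ (hp b)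
        -- `X² ≤ |X| ≤ 2 max X - X`
        obtain ⟨h₁, h₂⟩ := abs_le.1 (hX b)
        rcases le_total 0 (X b) with h | h <;> nlinarith [hb₀ b]
    _ = 2 * X b₀ := by simp only [mul_sub, sum_sub_distrib, hmean, ← sum_mul, hp1]; ring

end WeightedMean

section Restriction

variable {Ω : Type*} [Fintype Ω] {μ : Ω → ℝ} {n : ℕ} {F : Finset (Fin n) → (Fin n → Ω) → ℂ}
  {f : (Fin n → Ω) → ℝ}

theorem sum_norm2sq_le_quarter (hμ₀ : ∀ a, 0 ≤ μ a) (hμ : ∑ a, μ a = 1)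
    (hF : ∀ S, InVeq μ (F S) S) (hf : ∀ x, f x ∈ Set.Icc (0 : ℝ) 1)
    (hdecomp : (fun x => ((f x - ∑ y, wtp μ y * f y : ℝ) : ℂ)) = ∑ S, F S) :
    ∑ S, norm2sq μ (F S) ≤ 1 / 4 := by
  rw [← norm2sq_sum_inVeq hμ hF, ← hdecomp, norm2sq_ofReal]
  exact sum_mul_sub_mean_sq_le (wtp_nonneg hμ₀) (sum_wtp hμ) hf

theorem exists_sum_wtp_mul_averageOver_sq_le (hμ₀ : ∀ a, 0 ≤ μ a) (hμ : ∑ a, μ a = 1)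
    (hf : ∀ x, f x ∈ Set.Icc (0 : ℝ) 1) (I : Finset (Fin n)) :
    ∃ y, ∑ x, wtp μ x * averageOver μ I (fun z => f z - ∑ z, wtp μ z * f z) x ^ 2 ≤
      2 * (averageOver μ I f y - ∑ z, wtp μ z * f z) := by
  set α := ∑ z, wtp μ z * f z
  have hα : α ∈ Set.Icc (0 : ℝ) 1 :=
    (convex_Icc 0 1).sum_mem (fun x _ => wtp_nonneg hμ₀ x) (sum_wtp hμ) fun x _ => hf x
  have hmean : ∑ x, wtp μ x * averageOver μ I (fun z => f z - α) x = 0 :=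
    calc ∑ x, wtp μ x * averageOver μ I (fun z => f z - α) x
        = ∑ x, wtp μ x * (f x - α) := sum_wtp_smul_averageOver hμ _
      _ = 0 := by simp only [mul_sub, sum_sub_distrib, ← sum_mul, sum_wtp hμ, one_mul, α, sub_self]
  have hX : ∀ x, |averageOver μ I (fun z => f z - α) x| ≤ 1 := fun x =>
    abs_le.2 (averageOver_mem (convex_Icc (-1) 1) hμ₀ hμ
      (fun z => ⟨by linarith [(hf z).1, hα.2], by linarith [(hf z).2, hα.1]⟩) x)
  obtain ⟨y, hy⟩ := exists_sum_mul_sq_le_two_mul (wtp_nonneg hμ₀) (sum_wtp hμ) hX hmean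
  exact ⟨y, by rwa [averageOver_sub_const hμ] at hy⟩

end Restriction

section Counting

theorem choose_le_choose_sub_add (n m s : ℕ) :
    n.choose m ≤ (n - s).choose m + s * (n - 1).choose (m - 1) := by
  induction s with
  | zero => simp
  | succ s ih =>
    have hpascal : (n - s).choose m ≤ (n - (s + 1)).choose m + (n - 1).choose (m - 1) := by
      rcases h : n - s with _ | k
      · simp [show n - (s + 1) = 0 by omega]
      rw [show n - (s + 1) = k by omega]
      rcases m with _ | j
      · simp
      rw [Nat.choose_succ_succ', Nat.add_sub_cancel]
      have := Nat.choose_le_choose j (show k ≤ n - 1 by omega)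
      omega
    rw [add_mul, one_mul]
    omega

/-- `C(n-s,m) / C(n,m)` is the probability that a random `m`-subset of `[n]` misses a fixed
`s`-set; this is the union bound for it. -/
theorem one_sub_mul_div_mul_choose_le (n m s : ℕ) :
    (1 - (s * m : ℝ) / n) * n.choose m ≤ (n - s).choose m := by
  rcases n with _ | N
  · simp
  rcases m with _ | j
  · simp
  have hpascal : ((N + 1).choose (j + 1) : ℝ) ≤ (N + 1 - s).choose (j + 1) + s * N.choose j := by
    exact_mod_cast choose_le_choose_sub_add (N + 1) (j + 1) s
  have hratio : ((N + 1 : ℕ) : ℝ) * N.choose j = (N + 1).choose (j + 1) * (j + 1 : ℕ) := by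
    exact_mod_cast Nat.add_one_mul_choose_eq N j
  have hdiv : (s * (j + 1 : ℕ) : ℝ) / (N + 1 : ℕ) * (N + 1).choose (j + 1) = s * N.choose j := by
    rw [div_mul_eq_mul_div, div_eq_iff (by positivity)]
    linear_combination -(s : ℝ) * hratio
  rw [sub_mul, one_mul, hdiv]
  linarith

theorem exists_card_eq_mul_sum_le_sum_disjoint {n d m : ℕ} (hm : m ≤ n)
    {w : Finset (Fin n) → ℝ} (hw : ∀ S, 0 ≤ w S) :
    ∃ I : Finset (Fin n), I.card = m ∧
      (1 - (d * m : ℝ) / n) * ∑ S with S.card ≤ d, w S ≤ ∑ S with Disjoint S I, w S := by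
  set T := powersetCard m (univ : Finset (Fin n))
  have hT : T.Nonempty := powersetCard_nonempty.2 (by simpa using hm)
  have hcount : ∀ S : Finset (Fin n), #{I ∈ T | Disjoint S I} = (n - #S).choose m := by
    intro S
    have : {I ∈ T | Disjoint S I} = powersetCard m Sᶜ := by
      ext I
      simp [T, mem_powersetCard, subset_compl_iff_disjoint_left, and_comm]
    rw [this, card_powersetCard, card_compl, Fintype.card_fin]
  suffices ∑ _I ∈ T, (1 - (d * m : ℝ) / n) * ∑ S with S.card ≤ d, w S ≤
      ∑ I ∈ T, ∑ S with Disjoint S I, w S by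
    obtain ⟨I, hI, hle⟩ := exists_le_of_sum_le hT this
    exact ⟨I, (mem_powersetCard.1 hI).2, hle⟩
  calc ∑ _I ∈ T, (1 - (d * m : ℝ) / n) * ∑ S with S.card ≤ d, w S
      = ∑ S with S.card ≤ d, (1 - (d * m : ℝ) / n) * n.choose m * w S := by
        rw [sum_const, card_powersetCard, card_univ, Fintype.card_fin, nsmul_eq_mul, mul_sum,
          mul_sum]
        exact sum_congr rfl fun S _ => by ring
    _ ≤ ∑ S with S.card ≤ d, (#{I ∈ T | Disjoint S I} : ℝ) * w S := by
        refine sum_le_sum fun S hS => mul_le_mul_of_nonneg_right ?_ (hw S)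
        have hSd : #S ≤ d := (mem_filter.1 hS).2
        rw [hcount]
        refine le_trans ?_ (one_sub_mul_div_mul_choose_le n m #S)
        gcongr
    _ ≤ ∑ S, (#{I ∈ T | Disjoint S I} : ℝ) * w S :=
        sum_le_sum_of_subset_of_nonneg (filter_subset _ _) fun S _ _ =>
          mul_nonneg (Nat.cast_nonneg _) (hw S)
    _ = ∑ I ∈ T, ∑ S with Disjoint S I, w S := by
        simp_rw [natCast_card_filter, sum_mul, ite_mul, one_mul, zero_mul, sum_filter]
        exact sum_comm

end Counting

theorem eight_mul_sq_le_of_two_rpow_le {n d : ℕ} (hd : 1 ≤ d)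
    (h : (2 : ℝ) ^ (-(1 / 4 * n) / (d : ℝ) ^ 2) ≤ 1 / 4) : 8 * d ^ 2 ≤ n := by
  have hd2 : (0 : ℝ) < (d : ℝ) ^ 2 := by positivity
  have h' := h.trans_eq (by norm_num [Real.rpow_neg] : (1 / 4 : ℝ) = 2 ^ (-2 : ℝ))
  rw [Real.rpow_le_rpow_left_iff one_lt_two, div_le_iff₀ hd2] at h'
  exact_mod_cast (by linarith : (8 * d ^ 2 : ℝ) ≤ n)

theorem natCeil_div_two_mul_le {n d : ℕ} (hd : 1 ≤ d) (hn : 8 * d ^ 2 ≤ n) :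
    ⌈(n : ℝ) / (2 * d)⌉₊ ≤ n ∧ (d * ⌈(n : ℝ) / (2 * d)⌉₊ : ℝ) / n ≤ 5 / 8 := by
  set m := ⌈(n : ℝ) / (2 * d)⌉₊
  have hd' : (1 : ℝ) ≤ d := by exact_mod_cast hd
  have hn' : 8 * (d : ℝ) ^ 2 ≤ n := by exact_mod_cast hn
  have hm : (m : ℝ) < n / (2 * d) + 1 := Nat.ceil_lt_add_one (by positivity)
  have hdm : (d : ℝ) * m < n / 2 + d :=
    calc (d : ℝ) * m < d * (n / (2 * d) + 1) := by gcongr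
      _ = n / 2 + d := by field_simp
  refine ⟨?_, ?_⟩
  · have : (m : ℝ) ≤ n := by nlinarith [m.cast_nonneg (α := ℝ)]
    exact_mod_cast this
  · rw [div_le_iff₀ (by nlinarith)]
    nlinarith

/-- **Significant low-level weight yields a density bump under a restriction.** There is an
absolute constant `c > 0` such that: if `f : Ω^n → {0,1}` and its Efron–Stein decomposition of
`f - E[f]` has weight at least `ξ ≥ 2^{-c·n/d²}` up to level `d`, then there are `I ⊆ [n]` with
`|I| ≥ n/(2d)` and `y ∈ Ω^{[n]∖I}` with `E[f_{Ī→y}] ≥ E[f] + ξ/(4e)`. -/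
theorem restriction_to_density_bump :
    ∃ c : ℝ, 0 < c ∧
      ∀ (Ω : Type) [Fintype Ω] [Nonempty Ω] (μ : Ω → ℝ),
        (∀ a, 0 < μ a) → (∑ a, μ a = 1) →
        ∀ (n d : ℕ), 1 ≤ d →
        ∀ ξ : ℝ, 0 < ξ → (2 : ℝ) ^ (-(c * n) / (d : ℝ) ^ 2) ≤ ξ →
        ∀ f : (Fin n → Ω) → ℝ, (∀ x, f x = 0 ∨ f x = 1) →
        ∀ F : Finset (Fin n) → ((Fin n → Ω) → ℂ),
          (∀ S, InVeq μ (F S) S) →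
          ((fun x => (f x : ℂ) - ((∑ y, wtp μ y * f y : ℝ) : ℂ)) = ∑ S, F S) →
          ξ ≤ (∑ S ∈ Finset.univ.filter (fun S : Finset (Fin n) => S.card ≤ d),
                norm2sq μ (F S)) →
          ∃ (I : Finset (Fin n)) (y : Fin n → Ω),
            (n : ℝ) / (2 * d) ≤ (I.card : ℝ) ∧
            (∑ x, wtp μ x * f x) + ξ / (4 * Real.exp 1) ≤
              ∑ w : {i // i ∈ I} → Ω, (∏ i, μ (w i)) * f (mergeF I w y) := by
  refine ⟨1 / 4, by norm_num, ?_⟩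
  intro Ω _ _ μ hμ₀ hμ n d hd ξ hξ hξn f hf F hF hdecomp hweight
  have hμ₀' : ∀ a, 0 ≤ μ a := fun a => (hμ₀ a).le
  have hf01 : ∀ x, f x ∈ Set.Icc (0 : ℝ) 1 := fun x => by rcases hf x with h | h <;> simp [h]
  have hdecomp' : (fun x => ((f x - ∑ y, wtp μ y * f y : ℝ) : ℂ)) = ∑ S, F S := by
    simpa using hdecomp
  have hw : ∀ S, 0 ≤ norm2sq μ (F S) := fun S => norm2sq_nonneg hμ₀' (F S)
  have hξ4 : ξ ≤ 1 / 4 := hweight.trans <|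
    (sum_le_sum_of_subset_of_nonneg (filter_subset _ _) fun S _ _ => hw S).trans
      (sum_norm2sq_le_quarter hμ₀' hμ hF hf01 hdecomp')
  obtain ⟨hmn, hdm⟩ :=
    natCeil_div_two_mul_le hd (eight_mul_sq_le_of_two_rpow_le hd (hξn.trans hξ4))
  obtain ⟨I, hI, hIw⟩ := exists_card_eq_mul_sum_le_sum_disjoint (d := d) hmn hw
  obtain ⟨y, hy⟩ := exists_sum_wtp_mul_averageOver_sq_le hμ₀' hμ hf01 I
  rw [sum_wtp_mul_averageOver_sq hμ₀ hμ hF hdecomp'] at hy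
  refine ⟨I, y, hI ▸ Nat.le_ceil _, ?_⟩
  rw [← hI] at hdm hIw
  have hlow : 3 / 8 * ξ ≤ (1 - (d * I.card : ℝ) / n) * ∑ S with S.card ≤ d, norm2sq μ (F S) :=
    mul_le_mul (by linarith) hweight hξ.le (by linarith)
  have he : ξ / (4 * Real.exp 1) ≤ 3 / 16 * ξ := by
    rw [div_le_iff₀ (by positivity)]
    nlinarith [Real.exp_one_gt_d9]
  change _ ≤ averageOver μ I f y
  linarith

end
end

section
/- Let p be a prime and let 1 < n' < n be integers. If f : 𝔽_p^n → {0,1} is restricted 3-AP free, then for every n'-special basis v_1,…,v_{n'}, u_1,…,u_{n−n'} of 𝔽_p^n with associated change-of-basis map M and every z ∈ 𝔽_p^{n−n'}, the function x ↦ f(M(x,z)) on 𝔽_p^{n'} is restricted 3-AP free. -/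
open scoped BigOperators

/-- A function `f : 𝔽_p^n → {0,1}` (with values in `ℝ`) is restricted 3-AP free if there is no
`x` and nonzero `a` with all coordinates in `{0,1,2}` such that `f` is `1` at `x`, `x+a`, `x+2a`. -/
def Restricted3APFree {p n : ℕ} (f : (Fin n → ZMod p) → ℝ) : Prop :=
  ∀ x a : Fin n → ZMod p, (∀ i, a i = 0 ∨ a i = 1 ∨ a i = 2) → a ≠ 0 →
    ¬(f x = 1 ∧ f (x + a) = 1 ∧ f (x + 2 • a) = 1)

/-- The change-of-basis map `M(x,z) = ∑ᵢ xᵢ•vᵢ + ∑ⱼ zⱼ•uⱼ` associated to an `n'`-special basis. -/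
def chgBasis {p n n' : ℕ} (v : Fin n' → (Fin n → ZMod p))
    (u : Fin (n - n') → (Fin n → ZMod p))
    (x : Fin n' → ZMod p) (z : Fin (n - n') → ZMod p) : Fin n → ZMod p :=
  (∑ i, x i • v i) + (∑ j, z j • u j)

/-- An `n'`-special basis of `𝔽_p^n`: a basis `v₁,…,v_{n'}, u₁,…,u_{n-n'}` in which the `vᵢ`
have pairwise disjoint supports and all their nonzero coordinates equal `1`. -/
structure IsSpecialBasis (p n n' : ℕ) (v : Fin n' → (Fin n → ZMod p))
    (u : Fin (n - n') → (Fin n → ZMod p)) : Prop where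
  indep : LinearIndependent (ZMod p) (Sum.elim v u)
  spans : Submodule.span (ZMod p) (Set.range (Sum.elim v u)) = ⊤
  disjointSupports : ∀ i j, i ≠ j → ∀ k, v i k = 0 ∨ v j k = 0
  zeroOne : ∀ i k, v i k = 0 ∨ v i k = 1

/-- **Specialized changes of basis with a restricted `z`-part preserve restricted 3-AP
freeness.** -/
theorem restricted3APFree_chgBasis_restrict (p : ℕ) (hp : p.Prime)
    (n n' : ℕ) (hn' : 1 < n') (hlt : n' < n)
    (f : (Fin n → ZMod p) → ℝ) (hfree : Restricted3APFree f)
    (v : Fin n' → (Fin n → ZMod p)) (u : Fin (n - n') → (Fin n → ZMod p))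
    (hb : IsSpecialBasis p n n' v u) (z : Fin (n - n') → ZMod p) :
    Restricted3APFree (fun x : Fin n' → ZMod p => f (chgBasis v u x z)) := by
  intro x a ha ha0
  set A : Fin n → ZMod p := ∑ i, a i • v i with hA
  -- coordinates of A are in {0,1,2}
  have hAcoord : ∀ k, A k = 0 ∨ A k = 1 ∨ A k = 2 := by
    intro k
    have hAk : A k = ∑ i, a i * v i k := by
      simp [hA, Finset.sum_apply]
    by_cases h : ∀ i, v i k = 0
    · left; simp [hAk, h]
    · push_neg at h
      obtain ⟨i, hi⟩ := h
      have hvi : v i k = 1 := (hb.zeroOne i k).resolve_left hi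
      have : A k = a i := by
        rw [hAk, Finset.sum_eq_single i]
        · simp [hvi]
        · intro j _ hj
          rcases hb.disjointSupports j i hj k with h0 | h0
          · simp [h0]
          · exact absurd h0 hi
        · intro h; exact absurd (Finset.mem_univ i) h
      rw [this]; exact ha i
  -- A ≠ 0
  have hvindep : LinearIndependent (ZMod p) v := hb.indep.comp Sum.inl Sum.inl_injective
  have hA0 : A ≠ 0 := by
    intro h
    apply ha0
    have := (Fintype.linearIndependent_iff.mp hvindep) a (by rw [← hA, h])
    funext i; exact this i
  -- rewrite the three points
  have h1 : chgBasis v u (x + a) z = chgBasis v u x z + A := by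
    simp only [chgBasis, hA]
    rw [show (∑ i, (x + a) i • v i) = (∑ i, x i • v i) + ∑ i, a i • v i by
      rw [← Finset.sum_add_distrib]; exact Finset.sum_congr rfl fun i _ => by
        simp [add_smul]]
    abel
  have h2 : chgBasis v u (x + 2 • a) z = chgBasis v u x z + 2 • A := by
    simp only [chgBasis, hA]
    rw [show (∑ i, (x + 2 • a) i • v i) = (∑ i, x i • v i) + 2 • ∑ i, a i • v i by
      rw [Finset.smul_sum, ← Finset.sum_add_distrib]; exact Finset.sum_congr rfl fun i _ => by
        simp only [Pi.add_apply, Pi.smul_apply]; module]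
    abel
  intro ⟨hx, hxa, hx2a⟩
  exact hfree (chgBasis v u x z) A hAcoord hA0
    ⟨hx, by rw [← h1]; exact hxa, by rw [← h2]; exact hx2a⟩
end

section
/- Let p be an odd prime. If σ, γ, φ : 𝔽_p → ℤ satisfy σ(x) + γ(x+a) + φ(x+2a) = 0 for every x ∈ 𝔽_p and every a ∈ {0,1,2} ⊆ 𝔽_p, then σ, γ and φ are each constant functions. Equivalently, the distribution μ_AP admits no non-trivial Abelian embedding into (ℤ,+). -/
/-!
Subtracting the constraints for `a = 0` and `a = 1`, and for `a = 1` and `a = 2`, eliminates `σ`;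
comparing the two resulting relations shows that the forward difference `Δ_[1] φ` is invariant
under `x ↦ x + 2`. For odd `p`, `2` is a unit of `ZMod p`, so `Δ_[1] φ` is constant; as forward
differences sum to `0` over a finite group, that constant vanishes in the torsion-free group `ℤ`.
Hence `φ` is constant, and then so are `γ` and `σ`.
-/

open Function fwdDiff

theorem Function.Periodic.apply_eq_of_isUnit {n : ℕ} [NeZero n] {α : Type*} {f : ZMod n → α}
    {s : ZMod n} (hf : Periodic f s) (hs : IsUnit s) (x y : ZMod n) : f x = f y := by
  obtain ⟨u, rfl⟩ := hs
  have hy : y = x + ((y - x) * ↑u⁻¹).val • (u : ZMod n) := by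
    rw [nsmul_eq_mul, ZMod.natCast_zmod_val, mul_assoc, Units.inv_mul, mul_one, add_sub_cancel]
  rw [hy, hf.nsmul]

theorem Fintype.sum_fwdDiff {G M : Type*} [AddCommGroup G] [Fintype G] [AddCommGroup M]
    (s : G) (f : G → M) : ∑ x, Δ_[s] f x = 0 := by
  simp only [fwdDiff, Finset.sum_sub_distrib, sub_eq_zero]
  exact Equiv.sum_comp (Equiv.addRight s) f

theorem eq_zero_of_forall_fwdDiff_eq {G M : Type*} [AddCommGroup G] [Fintype G]
    [AddCommGroup M] [IsAddTorsionFree M] {s : G} {f : G → M} {c : M}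
    (hc : ∀ x, Δ_[s] f x = c) : c = 0 := by
  have hsum : Fintype.card G • c = Fintype.card G • (0 : M) := by
    rw [smul_zero, ← Fintype.sum_fwdDiff s f, Finset.sum_congr rfl fun x _ => hc x,
      Finset.sum_const, Finset.card_univ]
  exact nsmul_right_injective Fintype.card_ne_zero hsum

def IsAPEmbedding {R M : Type*} [CommRing R] [AddCommGroup M] (σ γ φ : R → M) : Prop :=
  ∀ x a : R, (a = 0 ∨ a = 1 ∨ a = 2) → σ x + γ (x + a) + φ (x + 2 * a) = 0

namespace IsAPEmbedding

section CommRing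

variable {R M : Type*} [CommRing R] [AddCommGroup M] {σ γ φ : R → M}

theorem add_apply_zero (hE : IsAPEmbedding σ γ φ) (x : R) : σ x + γ x + φ x = 0 := by
  simpa using hE x 0 (Or.inl rfl)

theorem add_apply_one (hE : IsAPEmbedding σ γ φ) (x : R) :
    σ x + γ (x + 1) + φ (x + 2) = 0 := by
  simpa using hE x 1 (Or.inr (Or.inl rfl))

theorem add_apply_two (hE : IsAPEmbedding σ γ φ) (x : R) :
    σ x + γ (x + 2) + φ (x + 4) = 0 := by
  simpa [show (2 : R) * 2 = 4 by norm_num] using hE x 2 (Or.inr (Or.inr rfl))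

theorem apply_add_one_add_apply_add_two (hE : IsAPEmbedding σ γ φ) (x : R) :
    γ (x + 1) + φ (x + 2) = γ x + φ x := by
  have h₀ := hE.add_apply_zero x
  have h₁ := hE.add_apply_one x
  rw [add_assoc] at h₀ h₁
  exact add_left_cancel (h₁.trans h₀.symm)

theorem apply_add_two_add_apply_add_four (hE : IsAPEmbedding σ γ φ) (x : R) :
    γ (x + 2) + φ (x + 4) = γ (x + 1) + φ (x + 2) := by
  have h₁ := hE.add_apply_one x
  have h₂ := hE.add_apply_two x
  rw [add_assoc] at h₁ h₂
  exact add_left_cancel (h₂.trans h₁.symm)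

theorem periodic_fwdDiff (hE : IsAPEmbedding σ γ φ) : Periodic (Δ_[1] φ) 2 := by
  intro x
  simp only [fwdDiff]
  have hA := hE.apply_add_one_add_apply_add_two x
  have hB := hE.apply_add_two_add_apply_add_four (x - 1)
  rw [show x - 1 + 2 = x + 1 by ring, show x - 1 + 4 = x + 2 + 1 by ring,
    show x - 1 + 1 = x by ring] at hB
  rw [sub_eq_sub_iff_add_eq_add, ← add_left_cancel_iff (a := γ (x + 1))]
  calc γ (x + 1) + (φ (x + 2 + 1) + φ x)
      = (γ (x + 1) + φ (x + 2 + 1)) + φ x := by abel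
    _ = (γ (x + 1) + φ (x + 2)) + φ (x + 1) := by rw [hB, hA]; abel
    _ = γ (x + 1) + (φ (x + 1) + φ (x + 2)) := by abel

end CommRing

variable {n : ℕ} [NeZero n] {σ γ φ : ZMod n → ℤ}

theorem periodic_φ (hE : IsAPEmbedding σ γ φ) (h2 : IsUnit (2 : ZMod n)) : Periodic φ 1 := by
  have he : ∀ x, Δ_[1] φ x = Δ_[1] φ 0 := fun x => hE.periodic_fwdDiff.apply_eq_of_isUnit h2 x 0
  intro x
  rw [← sub_eq_zero, ← fwdDiff, he, eq_zero_of_forall_fwdDiff_eq he]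

theorem periodic_γ (hE : IsAPEmbedding σ γ φ) (h2 : IsUnit (2 : ZMod n)) : Periodic γ 1 := by
  intro x
  have hA := hE.apply_add_one_add_apply_add_two x
  rw [show x + 2 = x + 1 + 1 by ring, hE.periodic_φ h2, hE.periodic_φ h2] at hA
  exact add_right_cancel hA

end IsAPEmbedding

theorem muAP_no_nontrivial_Z_embedding_general (p : ℕ) (hodd : Odd p)
    (σ γ φ : ZMod p → ℤ)
    (h : ∀ x a : ZMod p, (a = 0 ∨ a = 1 ∨ a = 2) →
      σ x + γ (x + a) + φ (x + 2 * a) = 0) :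
    (∀ x y, σ x = σ y) ∧ (∀ x y, γ x = γ y) ∧ (∀ x y, φ x = φ y) := by
  have : NeZero p := ⟨hodd.pos.ne'⟩
  have hE : IsAPEmbedding σ γ φ := h
  have h2 : IsUnit (2 : ZMod p) := by
    exact_mod_cast (ZMod.isUnit_iff_coprime 2 p).mpr (Nat.coprime_two_left.mpr hodd)
  have hφ := (hE.periodic_φ h2).apply_eq_of_isUnit isUnit_one
  have hγ := (hE.periodic_γ h2).apply_eq_of_isUnit isUnit_one
  refine ⟨fun x y => ?_, hγ, hφ⟩
  have hx := hE.add_apply_zero x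
  rw [hγ x y, hφ x y, ← hE.add_apply_zero y] at hx
  exact add_right_cancel (add_right_cancel hx)

/-- **`μ_AP` has no non-trivial Abelian embedding into `(ℤ,+)`.** If `σ, γ, φ : 𝔽_p → ℤ`
satisfy `σ(x) + γ(x+a) + φ(x+2a) = 0` for every `x ∈ 𝔽_p` and every `a ∈ {0,1,2} ⊆ 𝔽_p`
(i.e. on the whole support of `μ_AP`), then `σ`, `γ` and `φ` are all constant. -/
theorem muAP_no_nontrivial_Z_embedding (p : ℕ) (hp : p.Prime) (hodd : Odd p)
    (σ γ φ : ZMod p → ℤ)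
    (h : ∀ x a : ZMod p, (a = 0 ∨ a = 1 ∨ a = 2) →
      σ x + γ (x + a) + φ (x + 2 * a) = 0) :
    (∀ x y, σ x = σ y) ∧ (∀ x y, γ x = γ y) ∧ (∀ x y, φ x = φ y) :=
  muAP_no_nontrivial_Z_embedding_general p hodd σ γ φ h
end
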